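/- arXiv:1808.03052 — 4 statements merged into one kernel-verified Lean document; each statement's English description precedes it below -/
import Mathlib

section
/- For elements a, b in a unital complex Banach algebra A and every λ ∈ ℂ, e^{λa} e^{-λb} = ∑_{j=0}^∞ λ^j (C_{a,b}^j 1)/j!, the series converging absolutely in A. -/
open Filter Metric

variable {A : Type*}

/-- The operator `C_{a,b} = L_a - R_b`. -/
noncomputable def Cop [NormedRing A] [NormedAlgebra ℂ A] (a b : A) : Module.End ℂ A :=
  LinearMap.mulLeft ℂ a - LinearMap.mulRight ℂ b

/-- `ρ(a,b) = limsup_n ‖C_{a,b}^n 1‖^{1/n}`. -/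
noncomputable def rho [NormedRing A] [NormedAlgebra ℂ A] (a b : A) : ℝ :=
  Filter.limsup (fun n : ℕ => ‖(Cop a b ^ n) 1‖ ^ (1 / (n : ℝ))) Filter.atTop

/-- The spectral semidistance `d(a,b) = max{ρ(a,b), ρ(b,a)}`. -/
noncomputable def qd [NormedRing A] [NormedAlgebra ℂ A] (a b : A) : ℝ :=
  max (rho a b) (rho b a)

/-- The Riesz projection of `a` at `lam`, computed over a circle of radius `r`. -/
noncomputable def rieszP [NormedRing A] [NormedAlgebra ℂ A] (a : A) (lam : ℂ) (r : ℝ) : A :=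
  ((2 * Real.pi * Complex.I : ℂ))⁻¹ •
    circleIntegral (fun z => Ring.inverse (algebraMap ℂ A z - a)) lam r

open scoped Classical in
/-- The Riesz projection at an isolated spectral point (radius chosen by choice). -/
noncomputable def rieszIdem [NormedRing A] [NormedAlgebra ℂ A] (a : A) (lam : ℂ) : A :=
  if h : ∃ r : ℝ, 0 < r ∧ spectrum ℂ a ∩ closedBall lam r = {lam}
  then rieszP a lam h.choose else 0

/-- The Aupetit–Mouton spectral rank. -/
noncomputable def sRank [NormedRing A] [NormedAlgebra ℂ A] (a : A) : ℕ∞ :=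
  ⨆ x : A, (spectrum ℂ (x * a) \ {0}).encard

/-- Spectral multiplicity at a nonzero isolated spectral point: rank of the Riesz projection. -/
noncomputable def sMult [NormedRing A] [NormedAlgebra ℂ A] (a : A) (lam : ℂ) : ℕ :=
  (sRank (rieszIdem a lam)).toNat

/-- The Aupetit–Mouton spectral trace. -/
noncomputable def sTrace [NormedRing A] [NormedAlgebra ℂ A] (a : A) : ℂ :=
  ∑ᶠ lam ∈ spectrum ℂ a \ {0}, lam * (sMult a lam : ℂ)

/-- `det(1 + λ a)`, the Aupetit–Mouton spectral determinant. -/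
noncomputable def sDet [NormedRing A] [NormedAlgebra ℂ A] (a : A) (lam : ℂ) : ℂ :=
  ∏ᶠ mu ∈ spectrum ℂ a \ {0}, (1 + lam * mu) ^ sMult a mu

/-- The socle: the sum of all minimal left ideals. -/
def socle (A : Type*) [Ring A] : Ideal A := sSup {I : Ideal A | IsAtom I}

/-- Semisimplicity: the Jacobson radical is zero. -/
def IsSemisimpleBA (A : Type*) [Ring A] : Prop := Ideal.jacobson (⊥ : Ideal A) = ⊥

/-!
`C_{a,b} = L_a + R_{-b}` is a sum of two commuting operators, so the binomial theorem gives
`C_{a,b}^n 1 = ∑_{k+l=n} (n choose k) a^k (-b)^l`. After dividing by `n!` this is the `n`-th term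
of the Cauchy product of the exponential series of `a` and `-b`, which converges absolutely to
`e^a e^{-b}`. The parameter `λ` is absorbed by `C_{λa,λb} = λ C_{a,b}`.
-/

open Finset NormedSpace
open scoped Nat

section Cop

variable [NormedRing A] [NormedAlgebra ℂ A]

lemma Cop_eq_mulLeft_add_mulRight (a b : A) :
    Cop a b = LinearMap.mulLeft ℂ a + LinearMap.mulRight ℂ (-b) := by
  ext x
  simp [Cop, sub_eq_add_neg]

lemma Cop_smul (lam : ℂ) (a b : A) : Cop (lam • a) (lam • b) = lam • Cop a b := by
  ext x
  simp [Cop, smul_sub]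

lemma Cop_pow_apply (a b x : A) (n : ℕ) :
    (Cop a b ^ n) x = ∑ kl ∈ antidiagonal n, n.choose kl.1 • (a ^ kl.1 * x * (-b) ^ kl.2) := by
  rw [Cop_eq_mulLeft_add_mulRight, (LinearMap.commute_mulLeft_right a (-b)).add_pow',
    LinearMap.sum_apply]
  refine sum_congr rfl fun kl _ => ?_
  simp [LinearMap.pow_mulLeft, LinearMap.pow_mulRight, mul_assoc]

lemma inv_factorial_smul_Cop_pow_one (a b : A) (n : ℕ) :
    (n ! : ℂ)⁻¹ • (Cop a b ^ n) 1 =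
      ∑ kl ∈ antidiagonal n, ((kl.1 ! : ℂ)⁻¹ • a ^ kl.1) * ((kl.2 ! : ℂ)⁻¹ • (-b) ^ kl.2) := by
  rw [Cop_pow_apply, smul_sum]
  refine sum_congr rfl fun ⟨k, l⟩ hkl => ?_
  obtain rfl : k + l = n := HasAntidiagonal.mem_antidiagonal.mp hkl
  rw [mul_one, ← Nat.cast_smul_eq_nsmul ℂ, smul_smul, smul_mul_smul_comm, Nat.cast_add_choose]
  congr 1
  field_simp [(k + l).factorial_ne_zero]

lemma div_factorial_smul_Cop_pow_one (lam : ℂ) (a b : A) (n : ℕ) :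
    (lam ^ n / (n ! : ℂ)) • (Cop a b ^ n) 1 = (n ! : ℂ)⁻¹ • (Cop (lam • a) (lam • b) ^ n) 1 := by
  rw [Cop_smul, smul_pow, LinearMap.smul_apply, smul_smul, div_eq_inv_mul]

theorem hasSum_inv_factorial_smul_Cop_pow_one [CompleteSpace A] (a b : A) :
    (Summable fun n : ℕ => ‖(n ! : ℂ)⁻¹ • (Cop a b ^ n) 1‖) ∧
      HasSum (fun n : ℕ => (n ! : ℂ)⁻¹ • (Cop a b ^ n) 1) (exp a * exp (-b)) := by
  have ha := norm_expSeries_summable' (𝕂 := ℂ) a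
  have hb := norm_expSeries_summable' (𝕂 := ℂ) (-b)
  have hprod := summable_norm_sum_mul_antidiagonal_of_summable_norm ha hb
  simp_rw [inv_factorial_smul_Cop_pow_one]
  refine ⟨hprod, ?_⟩
  rw [exp_eq_tsum ℂ, tsum_mul_tsum_eq_tsum_sum_antidiagonal_of_summable_norm ha hb]
  exact hprod.of_norm.hasSum

end Cop

theorem stmt2 [NormedRing A] [NormedAlgebra ℂ A] [CompleteSpace A] (a b : A) (lam : ℂ) :
    (Summable fun j : ℕ => ‖(lam ^ j / (j.factorial : ℂ)) • (Cop a b ^ j) 1‖) ∧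
    HasSum (fun j : ℕ => (lam ^ j / (j.factorial : ℂ)) • (Cop a b ^ j) 1)
      (NormedSpace.exp (lam • a) * NormedSpace.exp (-(lam • b))) := by
  simp_rw [div_factorial_smul_Cop_pow_one lam a b]
  exact hasSum_inv_factorial_smul_Cop_pow_one (lam • a) (lam • b)
end

section
/- Let A be a unital complex Banach algebra, a, b ∈ A, and let q, r ∈ A be quasinilpotent elements with qa = aq and rb = br. Then ρ(a+q, b+r) = ρ(a,b). -/
open Filter Metric

variable {A : Type*}

/-!
`ρ(a,b)` is the local spectral radius of `C_{a,b} = L_a - R_b` at `1`. Since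
`C_{a+q,b+r} = C_{a,b} + C_{q,r}`, where the two summands commute and `C_{q,r} = L_q + R_{-r}`
has `‖C_{q,r}^k‖ ≤ N ε^k` for every `ε > 0` (both `q` and `-r` are quasinilpotent), the binomial
formula gives `‖C_{a+q,b+r}^n 1‖ ≤ N M (ρ(a,b) + 2ε)^n`, so `ρ(a+q,b+r) ≤ ρ(a,b)`. Applying this
to `a + q, b + r, -q, -r` gives the reverse inequality.
-/

open Filter Topology Asymptotics Finset

section Growth

variable {v : ℕ → ℝ} {M c : ℝ}

lemma exists_le_mul_pow_of_eventually_rpow_le (hv : ∀ n, 0 ≤ v n) (hc : 0 < c)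
    (h : ∀ᶠ n : ℕ in atTop, v n ^ (1 / (n : ℝ)) ≤ c) : ∃ M, ∀ n, v n ≤ M * c ^ n := by
  have hO : v =O[atTop] (c ^ ·) := IsBigO.of_bound 1 <| by
    filter_upwards [h, eventually_ne_atTop 0] with n hn hn0
    rw [Real.norm_of_nonneg (hv n), Real.norm_of_nonneg (pow_nonneg hc.le n), one_mul]
    calc v n = (v n ^ (1 / (n : ℝ))) ^ n := by rw [one_div, Real.rpow_inv_natCast_pow (hv n) hn0]
      _ ≤ c ^ n := pow_le_pow_left₀ (Real.rpow_nonneg (hv n) _) hn n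
  obtain ⟨M, -, hM⟩ := bound_of_isBigO_nat_atTop hO
  refine ⟨M, fun n => ?_⟩
  simpa [Real.norm_of_nonneg (hv n), abs_of_pos hc] using hM (pow_ne_zero n hc.ne')

lemma tendsto_rpow_one_div_mul (hM : 0 < M) (c : ℝ) :
    Tendsto (fun n : ℕ => M ^ (1 / (n : ℝ)) * c) atTop (𝓝 c) := by
  have h := (Real.continuousAt_const_rpow hM.ne').tendsto.comp tendsto_one_div_atTop_nhds_zero_nat
  simpa using (h.mul_const c)

lemma eventually_rpow_one_div_le_of_le_mul_pow (hv : ∀ n, 0 ≤ v n) (hc : 0 ≤ c)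
    (h : ∀ n, v n ≤ M * c ^ n) :
    ∀ᶠ n : ℕ in atTop, v n ^ (1 / (n : ℝ)) ≤ max M 1 ^ (1 / (n : ℝ)) * c := by
  filter_upwards [eventually_ne_atTop 0] with n hn
  -- `max M 1` rather than `M`: a base `0` would have `n`-th roots `0`, not tending to `1`.
  calc v n ^ (1 / (n : ℝ)) ≤ (max M 1 * c ^ n) ^ (1 / (n : ℝ)) :=
        Real.rpow_le_rpow (hv n)
          ((h n).trans (by gcongr; exact le_max_left M 1)) (by positivity)
    _ = max M 1 ^ (1 / (n : ℝ)) * c := by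
        rw [Real.mul_rpow (by positivity) (pow_nonneg hc n), one_div,
          Real.pow_rpow_inv_natCast hc hn]

lemma isBoundedUnder_rpow_one_div_of_le_mul_pow (hv : ∀ n, 0 ≤ v n) (hc : 0 ≤ c)
    (h : ∀ n, v n ≤ M * c ^ n) :
    IsBoundedUnder (· ≤ ·) atTop fun n : ℕ => v n ^ (1 / (n : ℝ)) :=
  (tendsto_rpow_one_div_mul (lt_max_of_lt_right one_pos) c).isBoundedUnder_le.mono_le
    (eventually_rpow_one_div_le_of_le_mul_pow hv hc h)

lemma limsup_rpow_one_div_le_of_le_mul_pow (hv : ∀ n, 0 ≤ v n) (hc : 0 ≤ c)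
    (h : ∀ n, v n ≤ M * c ^ n) :
    limsup (fun n : ℕ => v n ^ (1 / (n : ℝ))) atTop ≤ c := by
  have hlim := tendsto_rpow_one_div_mul (lt_max_of_lt_right one_pos : (0 : ℝ) < max M 1) c
  rw [← hlim.limsup_eq]
  exact limsup_le_limsup (eventually_rpow_one_div_le_of_le_mul_pow hv hc h)
    (isCoboundedUnder_le_of_le atTop fun n => Real.rpow_nonneg (hv n) _) hlim.isBoundedUnder_le

end Growth

section LocalSpectralRadius

variable {R E : Type*} [Semiring R] [NormedAddCommGroup E] [Module R E]

noncomputable def localSpectralRadius (T : Module.End R E) (x : E) : ℝ :=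
  limsup (fun n : ℕ => ‖(T ^ n) x‖ ^ (1 / (n : ℝ))) atTop

lemma norm_pow_apply_le_of_norm_apply_le {T : Module.End R E} {K : ℝ} (hK : 0 ≤ K)
    (hT : ∀ z, ‖T z‖ ≤ K * ‖z‖) (n : ℕ) (z : E) : ‖(T ^ n) z‖ ≤ K ^ n * ‖z‖ := by
  induction n with
  | zero => simp
  | succ n ih =>
    calc ‖(T ^ (n + 1)) z‖ = ‖T ((T ^ n) z)‖ := by rw [pow_succ', Module.End.mul_apply]
      _ ≤ K * (K ^ n * ‖z‖) := (hT _).trans (by gcongr)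
      _ = K ^ (n + 1) * ‖z‖ := by ring

lemma norm_add_pow_apply_le {S T : Module.End R E} (hST : Commute S T) {x : E} {M N s t : ℝ}
    (hN : 0 ≤ N) (ht : 0 ≤ t) (hS : ∀ j, ‖(S ^ j) x‖ ≤ M * s ^ j)
    (hT : ∀ k z, ‖(T ^ k) z‖ ≤ N * t ^ k * ‖z‖) (n : ℕ) :
    ‖((S + T) ^ n) x‖ ≤ N * M * (t + s) ^ n := by
  rw [add_comm, hST.symm.add_pow', LinearMap.sum_apply]
  calc ‖∑ m ∈ antidiagonal n, (n.choose m.1 • (T ^ m.1 * S ^ m.2)) x‖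
      ≤ ∑ m ∈ antidiagonal n, n.choose m.1 • (N * t ^ m.1 * (M * s ^ m.2)) := by
        refine (norm_sum_le _ _).trans (sum_le_sum fun m _ => ?_)
        rw [LinearMap.smul_apply, Module.End.mul_apply, nsmul_eq_mul]
        refine norm_nsmul_le.trans ?_
        gcongr
        exact (hT _ _).trans (by gcongr; exact hS _)
    _ = N * M * (t + s) ^ n := by
        rw [(Commute.all t s).add_pow', mul_sum]
        refine sum_congr rfl fun m _ => ?_
        simp only [nsmul_eq_mul]
        ring

lemma localSpectralRadius_add_le {S T : Module.End R E} (hST : Commute S T) {K : ℝ} (hK : 0 ≤ K)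
    (hS : ∀ z, ‖S z‖ ≤ K * ‖z‖)
    (hT : ∀ ε > 0, ∃ N ≥ 0, ∀ k z, ‖(T ^ k) z‖ ≤ N * ε ^ k * ‖z‖) (x : E) :
    localSpectralRadius (S + T) x ≤ localSpectralRadius S x := by
  set ρ := localSpectralRadius S x
  have hbdd : IsBoundedUnder (· ≤ ·) atTop fun n : ℕ => ‖(S ^ n) x‖ ^ (1 / (n : ℝ)) :=
    isBoundedUnder_rpow_one_div_of_le_mul_pow (fun _ => norm_nonneg _) hK
      fun n => (norm_pow_apply_le_of_norm_apply_le hK hS n x).trans_eq (mul_comm _ _)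
  have hρ : 0 ≤ ρ :=
    le_limsup_of_frequently_le (Frequently.of_forall fun n => by positivity) hbdd
  refine le_of_forall_pos_le_add fun ε hε => ?_
  obtain ⟨N, hN, hTε⟩ := hT (ε / 2) (by positivity)
  obtain ⟨M, hM⟩ := exists_le_mul_pow_of_eventually_rpow_le (fun _ => norm_nonneg _)
    (by positivity : 0 < ρ + ε / 2)
    ((eventually_lt_of_limsup_lt (by linarith : ρ < ρ + ε / 2) hbdd).mono fun _ => le_of_lt)
  have h := limsup_rpow_one_div_le_of_le_mul_pow (fun _ => norm_nonneg _) (by positivity)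
    (norm_add_pow_apply_le hST hN (by positivity) hM hTε)
  exact h.trans_eq (by ring)

end LocalSpectralRadius

lemma spectrum_neg_eq_singleton_zero {R B : Type*} [CommRing R] [Ring B] [Algebra R B] {q : B}
    (hq : spectrum R q = {0}) : spectrum R (-q) = {0} := by
  rw [← spectrum.neg_eq, hq, Set.neg_singleton, neg_zero]

section BanachAlgebra

variable [NormedRing A] [NormedAlgebra ℂ A]

lemma exists_norm_pow_le_mul_pow_of_spectrum_eq_zero [CompleteSpace A] {q : A}
    (hq : spectrum ℂ q = {0}) {ε : ℝ} (hε : 0 < ε) : ∃ M ≥ 0, ∀ n, ‖q ^ n‖ ≤ M * ε ^ n := by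
  have hgelfand := spectrum.pow_norm_pow_one_div_tendsto_nhds_spectralRadius q
  rw [show spectralRadius ℂ q = 0 by simp [spectralRadius, hq]] at hgelfand
  obtain ⟨M, hM⟩ := exists_le_mul_pow_of_eventually_rpow_le (fun _ => norm_nonneg _) hε <|
    (hgelfand.eventually_lt_const (ENNReal.ofReal_pos.mpr hε)).mono fun n hn =>
      ((ENNReal.ofReal_lt_ofReal_iff hε).mp hn).le
  exact ⟨M, by simpa using (norm_nonneg _).trans (hM 0), hM⟩

lemma rho_eq_localSpectralRadius (a b : A) : rho a b = localSpectralRadius (Cop a b) 1 := rfl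

lemma Cop_add (a b q r : A) : Cop (a + q) (b + r) = Cop a b + Cop q r := by
  ext z
  simp only [Cop, LinearMap.sub_apply, LinearMap.add_apply, LinearMap.mulLeft_apply,
    LinearMap.mulRight_apply]
  noncomm_ring

lemma Cop_eq_mulLeft_add_mulRight_neg (q r : A) :
    Cop q r = LinearMap.mulLeft ℂ q + LinearMap.mulRight ℂ (-r) := by
  ext z
  simp [Cop, sub_eq_add_neg]

lemma commute_Cop {a b q r : A} (hqa : Commute q a) (hrb : Commute r b) :
    Commute (Cop a b) (Cop q r) := by
  have hL : Commute (LinearMap.mulLeft ℂ a) (LinearMap.mulLeft ℂ q) :=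
    hqa.symm.map (NonUnitalAlgHom.lmul ℂ A)
  have hR : Commute (LinearMap.mulRight ℂ b) (LinearMap.mulRight ℂ r) :=
    LinearMap.ext fun z => by simp [mul_assoc, hrb.eq]
  exact (hL.sub_right (LinearMap.commute_mulLeft_right a r)).sub_left
    ((LinearMap.commute_mulLeft_right q b).symm.sub_right hR)

lemma norm_Cop_apply_le (a b z : A) : ‖Cop a b z‖ ≤ (‖a‖ + ‖b‖) * ‖z‖ :=
  calc ‖a * z - z * b‖ ≤ ‖a‖ * ‖z‖ + ‖z‖ * ‖b‖ :=
        (norm_sub_le _ _).trans (add_le_add (norm_mul_le _ _) (norm_mul_le _ _))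
    _ = (‖a‖ + ‖b‖) * ‖z‖ := by ring

lemma exists_norm_Cop_pow_apply_le [CompleteSpace A] {q r : A}
    (hq : spectrum ℂ q = {0}) (hr : spectrum ℂ r = {0}) {ε : ℝ} (hε : 0 < ε) :
    ∃ N ≥ 0, ∀ k z, ‖(Cop q r ^ k) z‖ ≤ N * ε ^ k * ‖z‖ := by
  obtain ⟨Mq, hMq, hMq'⟩ := exists_norm_pow_le_mul_pow_of_spectrum_eq_zero hq (half_pos hε)
  obtain ⟨Mr, hMr, hMr'⟩ :=
    exists_norm_pow_le_mul_pow_of_spectrum_eq_zero (spectrum_neg_eq_singleton_zero hr) (half_pos hε)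
  refine ⟨Mr * Mq, by positivity, fun k z => ?_⟩
  have hL : ∀ j, ‖(LinearMap.mulLeft ℂ q ^ j) z‖ ≤ Mq * ‖z‖ * (ε / 2) ^ j := fun j => by
    rw [LinearMap.pow_mulLeft, LinearMap.mulLeft_apply]
    exact (norm_mul_le _ _).trans (by nlinarith [hMq' j, norm_nonneg z])
  have hR : ∀ j w, ‖(LinearMap.mulRight ℂ (-r) ^ j) w‖ ≤ Mr * (ε / 2) ^ j * ‖w‖ := fun j w => by
    rw [LinearMap.pow_mulRight, LinearMap.mulRight_apply]
    exact (norm_mul_le _ _).trans (by nlinarith [hMr' j, norm_nonneg w])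
  calc ‖(Cop q r ^ k) z‖ ≤ Mr * (Mq * ‖z‖) * (ε / 2 + ε / 2) ^ k := by
        rw [Cop_eq_mulLeft_add_mulRight_neg]
        exact norm_add_pow_apply_le (LinearMap.commute_mulLeft_right q (-r)) hMr
          (by positivity) hL hR k
    _ = Mr * Mq * ε ^ k * ‖z‖ := by rw [add_halves]; ring

lemma rho_add_le [CompleteSpace A] {a b q r : A} (hq : spectrum ℂ q = {0})
    (hr : spectrum ℂ r = {0}) (hqa : Commute q a) (hrb : Commute r b) :
    rho (a + q) (b + r) ≤ rho a b := by
  rw [rho_eq_localSpectralRadius, rho_eq_localSpectralRadius, Cop_add]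
  exact localSpectralRadius_add_le (commute_Cop hqa hrb)
    (add_nonneg (norm_nonneg a) (norm_nonneg b)) (norm_Cop_apply_le a b)
    (fun _ => exists_norm_Cop_pow_apply_le hq hr) 1

end BanachAlgebra

theorem stmt5 [NormedRing A] [NormedAlgebra ℂ A] [CompleteSpace A] (a b q r : A)
    (hq : spectrum ℂ q = {0}) (hr : spectrum ℂ r = {0})
    (hqa : Commute q a) (hrb : Commute r b) :
    rho (a + q) (b + r) = rho a b := by
  refine le_antisymm (rho_add_le hq hr hqa hrb) ?_
  simpa using rho_add_le (a := a + q) (b := b + r) (spectrum_neg_eq_singleton_zero hq)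
    (spectrum_neg_eq_singleton_zero hr) ((hqa.add_right (Commute.refl q)).neg_left)
    ((hrb.add_right (Commute.refl r)).neg_left)
end

section
/- Let A be a semisimple unital complex Banach algebra and a, b ∈ Soc(A). If ρ(a,b) = 0, then the spectral radii of a and b are equal: r(a) = r(b). -/
open Filter Metric

variable {A : Type*}

/-! With `L_a`, `R_b` the left and right multiplications, `C_{a,b} = L_a - R_b`. The commuting
decompositions `L_a = C_{a,b} + R_b` and `R_b = -C_{a,b} + L_a`, applied to `1`, give binomial
expansions `a ^ n = ∑ (n choose k) C_{a,b}^k(1) b^(n-k)` and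
`b ^ n = ∑ (n choose k) a^(n-k) (-C_{a,b})^k(1)`. When `ρ(a,b) = 0` the terms `C_{a,b}^k(1)` grow
subexponentially, so Gelfand's formula gives `r(a) ≤ r(b) + ε` and `r(b) ≤ r(a) + ε` for every
`ε > 0`. -/

open Filter Topology Asymptotics Finset

lemma exists_pos_forall_le_mul_pow {u : ℕ → ℝ} (hu : ∀ n, 0 ≤ u n) {t : ℝ} (ht : 0 < t)
    (h : ∀ᶠ n in atTop, u n ≤ t ^ n) : ∃ M > 0, ∀ n, u n ≤ M * t ^ n := by
  have hO : u =O[atTop] (t ^ ·) := IsBigO.of_bound 1 <| by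
    filter_upwards [h] with n hn
    rwa [Real.norm_of_nonneg (hu n), Real.norm_of_nonneg (pow_nonneg ht.le n), one_mul]
  obtain ⟨M, hM, hMu⟩ := bound_of_isBigO_nat_atTop hO
  refine ⟨M, hM, fun n => ?_⟩
  have := hMu (pow_ne_zero n ht.ne')
  rwa [Real.norm_of_nonneg (hu n), Real.norm_of_nonneg (pow_nonneg ht.le n)] at this

lemma sum_antidiagonal_choose_mul_le {u v : ℕ → ℝ} {M N s t : ℝ} (hu0 : ∀ i, 0 ≤ u i)
    (hv0 : ∀ j, 0 ≤ v j) (hu : ∀ i, u i ≤ M * s ^ i) (hv : ∀ j, v j ≤ N * t ^ j) (n : ℕ) :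
    ∑ p ∈ antidiagonal n, n.choose p.1 * (u p.1 * v p.2) ≤ M * N * (s + t) ^ n := by
  calc ∑ p ∈ antidiagonal n, n.choose p.1 * (u p.1 * v p.2)
      ≤ ∑ p ∈ antidiagonal n, n.choose p.1 * (M * s ^ p.1 * (N * t ^ p.2)) := by
        refine sum_le_sum fun p _ => mul_le_mul_of_nonneg_left ?_ (Nat.cast_nonneg _)
        exact mul_le_mul (hu _) (hv _) (hv0 _) ((hu0 _).trans (hu _))
    _ = M * N * (s + t) ^ n := by
        rw [(Commute.all s t).add_pow', mul_sum]
        exact sum_congr rfl fun p _ => by rw [nsmul_eq_mul]; ring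

lemma isBoundedUnder_rpow_one_div {u : ℕ → ℝ} (hu : ∀ n, 0 ≤ u n) {C K : ℝ} (hK : 0 ≤ K)
    (h : ∀ n, u n ≤ C * K ^ n) : IsBoundedUnder (· ≤ ·) atTop fun n => u n ^ (1 / (n : ℝ)) := by
  set D := max C 1
  refine isBoundedUnder_of_eventually_le (a := D * K) ?_
  filter_upwards [eventually_ne_atTop 0] with n hn
  -- `D ≤ D ^ n` absorbs the constant into the geometric rate
  have hun : u n ≤ (D * K) ^ n := calc
    u n ≤ D * K ^ n := (h n).trans (by gcongr; exact le_max_left _ _)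
    _ ≤ D ^ n * K ^ n := by gcongr; exact le_self_pow₀ (le_max_right _ _) hn
    _ = (D * K) ^ n := (mul_pow _ _ _).symm
  calc u n ^ (1 / (n : ℝ)) ≤ ((D * K) ^ n) ^ (1 / (n : ℝ)) := by gcongr; exact hu n
    _ = D * K := by
      rw [one_div, Real.pow_rpow_inv_natCast (mul_nonneg (by positivity) hK) hn]

lemma eventually_le_pow_of_limsup_rpow_one_div_eq_zero {u : ℕ → ℝ} (hu : ∀ n, 0 ≤ u n)
    (hbdd : IsBoundedUnder (· ≤ ·) atTop fun n => u n ^ (1 / (n : ℝ)))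
    (h : limsup (fun n => u n ^ (1 / (n : ℝ))) atTop = 0) {ε : ℝ} (hε : 0 < ε) :
    ∀ᶠ n in atTop, u n ≤ ε ^ n := by
  filter_upwards [eventually_lt_of_limsup_lt (h ▸ hε) hbdd, eventually_ne_atTop 0] with n hlt hn
  calc u n = (u n ^ (1 / (n : ℝ))) ^ n := by
        rw [one_div, Real.rpow_inv_natCast_pow (hu n) hn]
    _ ≤ ε ^ n := by gcongr; exact Real.rpow_nonneg (hu n) _

lemma Commute.add_pow_apply {R M : Type*} [CommSemiring R] [AddCommMonoid M] [Module R M]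
    {f g : Module.End R M} (h : Commute f g) (n : ℕ) (x : M) :
    ((f + g) ^ n) x = ∑ p ∈ antidiagonal n, n.choose p.1 • (g ^ p.2) ((f ^ p.1) x) := by
  rw [h.add_pow', LinearMap.sum_apply]
  refine sum_congr rfl fun p _ => ?_
  rw [LinearMap.smul_apply, (h.pow_pow p.1 p.2).eq, Module.End.mul_apply]

lemma norm_neg_pow_apply {R E : Type*} [Ring R] [SeminormedAddCommGroup E] [Module R E]
    (f : Module.End R E) (n : ℕ) (x : E) : ‖((-f) ^ n) x‖ = ‖(f ^ n) x‖ := by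
  rcases neg_one_pow_eq_or (Module.End R E) n with h | h <;> simp [neg_pow, h]

section SpectralRadius

variable [NormedRing A] [NormedAlgebra ℂ A] [CompleteSpace A]

lemma spectralRadius_le_of_norm_pow_le {a : A} {M t : ℝ} (hM : 0 < M) (ht : 0 ≤ t)
    (h : ∀ n, ‖a ^ n‖ ≤ M * t ^ n) : spectralRadius ℂ a ≤ ENNReal.ofReal t := by
  have hM1 : Tendsto (fun n : ℕ => M ^ (1 / (n : ℝ))) atTop (𝓝 1) := by
    refine (Real.rpow_zero M ▸ (Real.continuousAt_const_rpow hM.ne').tendsto).comp ?_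
    exact tendsto_one_div_atTop_nhds_zero_nat
  have hlim : Tendsto (fun n : ℕ => ENNReal.ofReal (M ^ (1 / (n : ℝ)) * t)) atTop
      (𝓝 (ENNReal.ofReal t)) := by
    simpa using ENNReal.tendsto_ofReal (hM1.mul_const t)
  refine le_of_tendsto_of_tendsto
    (spectrum.pow_norm_pow_one_div_tendsto_nhds_spectralRadius a) hlim ?_
  filter_upwards [eventually_ne_atTop 0] with n hn
  refine ENNReal.ofReal_le_ofReal ?_
  calc ‖a ^ n‖ ^ (1 / (n : ℝ)) ≤ (M * t ^ n) ^ (1 / (n : ℝ)) := by gcongr; exact h n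
    _ = M ^ (1 / (n : ℝ)) * t := by
        rw [Real.mul_rpow hM.le (by positivity), one_div, Real.pow_rpow_inv_natCast ht hn]

lemma exists_norm_pow_le_mul_pow_of_spectralRadius_lt {a : A} {t : ℝ}
    (ht : spectralRadius ℂ a < ENNReal.ofReal t) : ∃ M > 0, ∀ n, ‖a ^ n‖ ≤ M * t ^ n := by
  have ht0 : 0 < t := ENNReal.ofReal_pos.mp (pos_of_gt ht)
  refine exists_pos_forall_le_mul_pow (fun n => norm_nonneg _) ht0 ?_
  filter_upwards [(spectrum.pow_norm_pow_one_div_tendsto_nhds_spectralRadius a).eventually_lt_const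
    ht, eventually_ne_atTop 0] with n hlt hn
  have hroot : ‖a ^ n‖ ^ (1 / (n : ℝ)) < t := (ENNReal.ofReal_lt_ofReal_iff ht0).mp hlt
  calc ‖a ^ n‖ = (‖a ^ n‖ ^ (1 / (n : ℝ))) ^ n := by
        rw [one_div, Real.rpow_inv_natCast_pow (norm_nonneg _) hn]
    _ ≤ t ^ n := by gcongr

lemma spectralRadius_le_of_norm_pow_le_sum {a b : A} {c : ℕ → ℝ} (hc0 : ∀ k, 0 ≤ c k)
    (hc : ∀ ε > 0, ∀ᶠ k in atTop, c k ≤ ε ^ k)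
    (h : ∀ n, ‖a ^ n‖ ≤ ∑ p ∈ antidiagonal n, n.choose p.1 * (c p.1 * ‖b ^ p.2‖)) :
    spectralRadius ℂ a ≤ spectralRadius ℂ b := by
  refine ENNReal.le_of_forall_pos_le_add fun ε hε hb => ?_
  set s := (spectralRadius ℂ b).toNNReal
  have hs : spectralRadius ℂ b = ENNReal.ofReal s := by
    rw [ENNReal.ofReal_coe_nnreal, ENNReal.coe_toNNReal hb.ne]
  have hδ : (0 : ℝ) < ε / 2 := by positivity
  obtain ⟨N, hN, hNc⟩ := exists_pos_forall_le_mul_pow hc0 hδ (hc _ hδ)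
  have hbt : spectralRadius ℂ b < ENNReal.ofReal (s + ε / 2) := by
    rw [hs, ENNReal.ofReal_lt_ofReal_iff (by positivity)]
    exact lt_add_of_pos_right _ hδ
  obtain ⟨M, hM, hMb⟩ := exists_norm_pow_le_mul_pow_of_spectralRadius_lt hbt
  calc spectralRadius ℂ a ≤ ENNReal.ofReal (ε / 2 + (s + ε / 2)) :=
        spectralRadius_le_of_norm_pow_le (mul_pos hN hM) (by positivity) fun n =>
          (h n).trans (sum_antidiagonal_choose_mul_le hc0 (fun _ => norm_nonneg _) hNc hMb n)
    _ = spectralRadius ℂ b + ε := by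
        rw [hs, show ε / 2 + (s + ε / 2) = (s : ℝ) + ε by ring,
          ENNReal.ofReal_add s.coe_nonneg ε.coe_nonneg, ENNReal.ofReal_coe_nnreal,
          ENNReal.ofReal_coe_nnreal]

end SpectralRadius

section Cop

variable [NormedRing A] [NormedAlgebra ℂ A]

lemma norm_Cop_pow_apply_le (a b x : A) (n : ℕ) :
    ‖(Cop a b ^ n) x‖ ≤ (‖a‖ + ‖b‖) ^ n * ‖x‖ := by
  induction n with
  | zero => simp
  | succ n ih =>
    rw [pow_succ', Module.End.mul_apply, pow_succ, mul_assoc]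
    set y := (Cop a b ^ n) x
    calc ‖a * y - y * b‖ ≤ ‖a‖ * ‖y‖ + ‖y‖ * ‖b‖ :=
          (norm_sub_le _ _).trans (add_le_add (norm_mul_le _ _) (norm_mul_le _ _))
      _ = (‖a‖ + ‖b‖) * ‖y‖ := by ring
      _ ≤ (‖a‖ + ‖b‖) * ((‖a‖ + ‖b‖) ^ n * ‖x‖) := by gcongr
      _ = _ := by ring

lemma eventually_norm_Cop_pow_one_le {a b : A} (h : rho a b = 0) {ε : ℝ} (hε : 0 < ε) :
    ∀ᶠ n in atTop, ‖(Cop a b ^ n) 1‖ ≤ ε ^ n :=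
  have hle n : ‖(Cop a b ^ n) 1‖ ≤ ‖(1 : A)‖ * (‖a‖ + ‖b‖) ^ n :=
    (norm_Cop_pow_apply_le a b 1 n).trans_eq (mul_comm _ _)
  eventually_le_pow_of_limsup_rpow_one_div_eq_zero (fun _ => norm_nonneg _)
    (isBoundedUnder_rpow_one_div (fun _ => norm_nonneg _) (by positivity) hle) h hε

lemma norm_pow_le_sum_choose_mul_norm_Cop (a b : A) (n : ℕ) :
    ‖a ^ n‖ ≤ ∑ p ∈ antidiagonal n, n.choose p.1 * (‖(Cop a b ^ p.1) 1‖ * ‖b ^ p.2‖) := by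
  have hL : Cop a b + LinearMap.mulRight ℂ b = LinearMap.mulLeft ℂ a := sub_add_cancel _ _
  have hcomm : Commute (Cop a b) (LinearMap.mulRight ℂ b) :=
    (LinearMap.commute_mulLeft_right a b).sub_left (Commute.refl _)
  have hexp := hcomm.add_pow_apply n 1
  rw [hL, LinearMap.pow_mulLeft, LinearMap.mulLeft_apply, mul_one] at hexp
  rw [hexp]
  refine (norm_sum_le _ _).trans (sum_le_sum fun p _ => norm_nsmul_le.trans ?_)
  rw [LinearMap.pow_mulRight, LinearMap.mulRight_apply]
  gcongr
  exact norm_mul_le _ _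

lemma norm_pow_le_sum_choose_mul_norm_Cop' (a b : A) (n : ℕ) :
    ‖b ^ n‖ ≤ ∑ p ∈ antidiagonal n, n.choose p.1 * (‖(Cop a b ^ p.1) 1‖ * ‖a ^ p.2‖) := by
  have hR : -Cop a b + LinearMap.mulLeft ℂ a = LinearMap.mulRight ℂ b := by
    rw [Cop, neg_sub, sub_add_cancel]
  have hcomm : Commute (-Cop a b) (LinearMap.mulLeft ℂ a) :=
    ((Commute.refl _).sub_right (LinearMap.commute_mulLeft_right a b)).symm.neg_left
  have hexp := hcomm.add_pow_apply n 1
  rw [hR, LinearMap.pow_mulRight, LinearMap.mulRight_apply, one_mul] at hexp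
  rw [hexp]
  refine (norm_sum_le _ _).trans (sum_le_sum fun p _ => norm_nsmul_le.trans ?_)
  rw [LinearMap.pow_mulLeft, LinearMap.mulLeft_apply, ← norm_neg_pow_apply]
  gcongr
  exact (norm_mul_le _ _).trans_eq (mul_comm _ _)

end Cop

theorem stmt9_general [NormedRing A] [NormedAlgebra ℂ A] [CompleteSpace A]
    (a b : A) (h : rho a b = 0) : spectralRadius ℂ a = spectralRadius ℂ b :=
  le_antisymm
    (spectralRadius_le_of_norm_pow_le_sum (fun _ => norm_nonneg _)
      (fun _ => eventually_norm_Cop_pow_one_le h) (norm_pow_le_sum_choose_mul_norm_Cop a b))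
    (spectralRadius_le_of_norm_pow_le_sum (fun _ => norm_nonneg _)
      (fun _ => eventually_norm_Cop_pow_one_le h) (norm_pow_le_sum_choose_mul_norm_Cop' a b))

theorem stmt9 [NormedRing A] [NormedAlgebra ℂ A] [CompleteSpace A]
    (hA : IsSemisimpleBA A) (a b : A) (ha : a ∈ socle A) (hb : b ∈ socle A)
    (h : rho a b = 0) : spectralRadius ℂ a = spectralRadius ℂ b :=
  stmt9_general a b h
end

section
/- Let A be a unital C*-algebra and let a, b ∈ A be normal elements such that 0 is the only possible accumulation point of σ(a). Then d(a,b) = 0 if and only if a = b. -/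
open Filter Metric Topology
set_option linter.unusedSectionVars false
set_option linter.deprecated false
set_option maxHeartbeats 1000000

variable {A : Type*}

section Aux

variable [NormedRing A] [StarRing A] [CStarRing A] [NormedAlgebra ℂ A]
    [CompleteSpace A] [StarModule ℂ A]

lemma Cop_apply (a b x : A) : Cop a b x = a * x - x * b := by
  simp [Cop, LinearMap.sub_apply, LinearMap.mulLeft_apply, LinearMap.mulRight_apply]

lemma Cop_pow_zero (a b : A) : (Cop a b ^ 0) (1 : A) = 1 := by
  simp

lemma Cop_pow_succ (a b : A) (n : ℕ) :
    (Cop a b ^ (n + 1)) (1 : A) = a * ((Cop a b ^ n) 1) - ((Cop a b ^ n) 1) * b := by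
  rw [pow_succ', Module.End.mul_apply, Cop_apply]

lemma Cop_norm_le [Nontrivial A] (a b : A) (n : ℕ) :
    ‖(Cop a b ^ n) (1 : A)‖ ≤ (‖a‖ + ‖b‖) ^ n := by
  induction n with
  | zero => simp
  | succ n ih =>
    rw [Cop_pow_succ, pow_succ]
    have h1 : ‖a * ((Cop a b ^ n) 1) - ((Cop a b ^ n) 1) * b‖ ≤
        ‖a‖ * ‖(Cop a b ^ n) (1:A)‖ + ‖(Cop a b ^ n) (1:A)‖ * ‖b‖ :=
      (norm_sub_le _ _).trans (add_le_add (norm_mul_le _ _) (norm_mul_le _ _))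
    have hn : (0:ℝ) ≤ ‖(Cop a b ^ n) (1:A)‖ := norm_nonneg _
    nlinarith [norm_nonneg a, norm_nonneg b, pow_nonneg (by positivity : (0:ℝ) ≤ ‖a‖ + ‖b‖) n]

lemma eps_bound [Nontrivial A] {a b : A} (h : rho a b ≤ 0) :
    ∀ ε > 0, ∃ C > 0, ∀ n, ‖(Cop a b ^ n) (1 : A)‖ ≤ C * ε ^ n := by
  intro ε hε
  set u : ℕ → ℝ := fun n => ‖(Cop a b ^ n) (1:A)‖ ^ (1 / (n : ℝ)) with hu
  have hbound : ∀ n, u n ≤ max (‖a‖ + ‖b‖) 1 := by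
    intro n
    match n with
    | 0 => simp [hu]
    | (m+1) =>
      have h2 : u (m+1) ≤ ((‖a‖ + ‖b‖) ^ (m+1) : ℝ) ^ (1 / ((m+1 : ℕ) : ℝ)) :=
        Real.rpow_le_rpow (norm_nonneg _) (Cop_norm_le a b (m+1)) (by positivity)
      have h3 : ((‖a‖ + ‖b‖) ^ (m+1) : ℝ) ^ (1 / ((m+1 : ℕ) : ℝ)) = ‖a‖ + ‖b‖ := by
        rw [← Real.rpow_natCast (‖a‖ + ‖b‖) (m+1), ← Real.rpow_mul (by positivity),
          mul_one_div, div_self (by positivity), Real.rpow_one]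
      exact (h2.trans h3.le).trans (le_max_left _ _)
  have hlt : ∀ᶠ n in atTop, u n < ε := by
    refine eventually_lt_of_limsup_lt (lt_of_le_of_lt h hε) ?_
    exact isBoundedUnder_of ⟨max (‖a‖ + ‖b‖) 1, fun n => hbound n⟩
  obtain ⟨N, hN⟩ := eventually_atTop.mp hlt
  have hNbig : ∀ n, N + 1 ≤ n → ‖(Cop a b ^ n) (1:A)‖ ≤ ε ^ n := by
    intro n hn
    have hn0 : ((n:ℕ):ℝ) ≠ 0 := by
      have : 0 < n := by omega
      exact_mod_cast this.ne'
    have he : ‖(Cop a b ^ n) (1:A)‖ = (u n) ^ n := by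
      rw [hu, ← Real.rpow_natCast (‖(Cop a b ^ n) (1:A)‖ ^ (1 / (n : ℝ))) n,
        ← Real.rpow_mul (norm_nonneg _), one_div_mul_cancel hn0, Real.rpow_one]
    rw [he]
    exact pow_le_pow_left₀ (Real.rpow_nonneg (norm_nonneg _) _) (hN n (by omega)).le n
  refine ⟨(∑ i ∈ Finset.range (N+1), ‖(Cop a b ^ i) (1:A)‖ / ε ^ i) + 1, by positivity, ?_⟩
  intro n
  by_cases hn : n < N + 1
  · have hterm : ‖(Cop a b ^ n) (1:A)‖ / ε ^ n ≤
        (∑ i ∈ Finset.range (N+1), ‖(Cop a b ^ i) (1:A)‖ / ε ^ i) + 1 := by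
      have : ‖(Cop a b ^ n) (1:A)‖ / ε ^ n ≤
          ∑ i ∈ Finset.range (N+1), ‖(Cop a b ^ i) (1:A)‖ / ε ^ i :=
        Finset.single_le_sum (f := fun i => ‖(Cop a b ^ i) (1:A)‖ / ε ^ i)
          (fun i _ => by positivity) (Finset.mem_range.mpr hn)
      linarith
    calc ‖(Cop a b ^ n) (1:A)‖ = (‖(Cop a b ^ n) (1:A)‖ / ε ^ n) * ε ^ n := by
          field_simp
    _ ≤ _ := mul_le_mul_of_nonneg_right hterm (by positivity)
  · have h1 : (1:ℝ) ≤ (∑ i ∈ Finset.range (N+1), ‖(Cop a b ^ i) (1:A)‖ / ε ^ i) + 1 := by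
      have : (0:ℝ) ≤ ∑ i ∈ Finset.range (N+1), ‖(Cop a b ^ i) (1:A)‖ / ε ^ i :=
        Finset.sum_nonneg fun i _ => by positivity
      linarith
    calc ‖(Cop a b ^ n) (1:A)‖ ≤ ε ^ n := hNbig n (by omega)
    _ ≤ _ := le_mul_of_one_le_left (by positivity) h1

lemma tsum_telescope {f : ℕ → A} (hf : Summable f) (h0 : Tendsto f atTop (𝓝 0)) :
    ∑' n, (f n - f (n + 1)) = f 0 := by
  have hshift : Summable fun n => f (n + 1) := (summable_nat_add_iff 1).mpr hf
  have hs : Summable fun n => f n - f (n + 1) := hf.sub hshift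
  refine HasSum.tsum_eq ?_
  rw [hs.hasSum_iff_tendsto_nat]
  have : ∀ n : ℕ, ∑ i ∈ Finset.range n, (f i - f (i + 1)) = f 0 - f n := by
    intro n; exact Finset.sum_range_sub' f n
  simp_rw [this]
  simpa using tendsto_const_nhds.sub h0

lemma norm_pow_le'' [Nontrivial A] (u : A) (m : ℕ) : ‖u ^ m‖ ≤ ‖u‖ ^ m := by
  cases m with
  | zero => simp
  | succ m => exact norm_pow_le' u m.succ_pos

lemma summable_geom_aux [Nontrivial A] {c : ℕ → A} {u : A} {C ε : ℝ} (hε : 0 < ε)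
    (hc : ∀ n, ‖c n‖ ≤ C * ε ^ n) (hq : ε * ‖u‖ < 1) (k : ℕ)
    (w : ℕ → A) (hw : ∀ n, ‖w n‖ ≤ ‖c n‖ * ‖u‖ ^ (n + k)) : Summable w := by
  refine Summable.of_norm_bounded (g := fun n => (C * ‖u‖ ^ k) * (ε * ‖u‖) ^ n) ?_ ?_
  · exact (summable_geometric_of_lt_one (by positivity) hq).mul_left _
  · intro n
    calc ‖w n‖ ≤ ‖c n‖ * ‖u‖ ^ (n + k) := hw n
    _ ≤ (C * ε ^ n) * ‖u‖ ^ (n + k) :=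
        mul_le_mul_of_nonneg_right (hc n) (by positivity)
    _ = (C * ‖u‖ ^ k) * (ε * ‖u‖) ^ n := by rw [pow_add, mul_pow]; ring


lemma inverse_eq_tsum [Nontrivial A] {a b : A} {z : ℂ}
    (hzb : IsUnit (algebraMap ℂ A z - b))
    (hab : ∀ ε > 0, ∃ C > 0, ∀ n, ‖(Cop a b ^ n) (1:A)‖ ≤ C * ε ^ n)
    (hba : ∀ ε > 0, ∃ C > 0, ∀ n, ‖(Cop b a ^ n) (1:A)‖ ≤ C * ε ^ n) :
    IsUnit (algebraMap ℂ A z - a) ∧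
      Ring.inverse (algebraMap ℂ A z - a)
        = ∑' n, (Cop a b ^ n) (1:A) * (Ring.inverse (algebraMap ℂ A z - b)) ^ (n + 1) := by
  set Z : A := algebraMap ℂ A z with hZ
  set u : A := Ring.inverse (Z - b) with hudef
  have hu1 : (Z - b) * u = 1 := Ring.mul_inverse_cancel _ hzb
  have hu2 : u * (Z - b) = 1 := Ring.inverse_mul_cancel _ hzb
  set ε : ℝ := (2 * (‖u‖ + 1))⁻¹ with hεdef
  have hεpos : 0 < ε := by positivity
  have hq : ε * ‖u‖ < 1 := by
    rw [hεdef]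
    rw [inv_mul_lt_iff₀ (by positivity)]
    nlinarith [norm_nonneg u]
  obtain ⟨C₁, hC₁, hc₁⟩ := hab ε hεpos
  obtain ⟨C₂, hC₂, hc₂⟩ := hba ε hεpos
  set c : ℕ → A := fun n => (Cop a b ^ n) (1:A) with hc
  set c' : ℕ → A := fun n => (Cop b a ^ n) (1:A) with hc'
  -- summability facts
  have hSf : Summable (fun n => c n * u ^ n) := by
    refine summable_geom_aux hεpos hc₁ hq 0 _ fun n => ?_
    simpa using (norm_mul_le _ _).trans
      (mul_le_mul_of_nonneg_left (norm_pow_le'' u n) (norm_nonneg _))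
  have hSg : Summable (fun n => c n * u ^ (n + 1)) := by
    refine summable_geom_aux hεpos hc₁ hq 1 _ fun n => ?_
    exact (norm_mul_le _ _).trans
      (mul_le_mul_of_nonneg_left (norm_pow_le'' u (n+1)) (norm_nonneg _))
  have hSh : Summable (fun n => ((-1:ℂ)) ^ n • (u ^ n * c' n)) := by
    refine summable_geom_aux hεpos hc₂ hq 0 _ fun n => ?_
    rw [norm_smul]
    simp only [norm_pow, norm_neg, norm_one, one_pow, one_mul]
    calc ‖u ^ n * c' n‖ ≤ ‖u ^ n‖ * ‖c' n‖ := norm_mul_le _ _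
    _ ≤ ‖u‖ ^ n * ‖c' n‖ := mul_le_mul_of_nonneg_right (norm_pow_le'' u n) (norm_nonneg _)
    _ = ‖c' n‖ * ‖u‖ ^ (n + 0) := by rw [add_zero]; ring
  have hSg' : Summable (fun n => ((-1:ℂ)) ^ n • (u ^ (n+1) * c' n)) := by
    refine summable_geom_aux hεpos hc₂ hq 1 _ fun n => ?_
    rw [norm_smul]
    simp only [norm_pow, norm_neg, norm_one, one_pow, one_mul]
    calc ‖u ^ (n+1) * c' n‖ ≤ ‖u ^ (n+1)‖ * ‖c' n‖ := norm_mul_le _ _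
    _ ≤ ‖u‖ ^ (n+1) * ‖c' n‖ :=
        mul_le_mul_of_nonneg_right (norm_pow_le'' u (n+1)) (norm_nonneg _)
    _ = ‖c' n‖ * ‖u‖ ^ (n + 1) := by ring
  set S : A := ∑' n, c n * u ^ (n + 1) with hS
  set T : A := ∑' n, ((-1:ℂ)) ^ n • (u ^ (n+1) * c' n) with hT
  -- right inverse
  have hZbu : ∀ n : ℕ, (Z - b) * u ^ (n + 1) = u ^ n := by
    intro n
    rw [pow_succ' u n, ← mul_assoc, hu1, one_mul]
  have hrec : ∀ n : ℕ, a * c n = c (n + 1) + c n * b := by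
    intro n
    rw [hc]
    simp only
    rw [Cop_pow_succ a b n, sub_add_cancel]
  have hterm : ∀ n : ℕ, (Z - a) * (c n * u ^ (n + 1))
      = c n * u ^ n - c (n + 1) * u ^ (n + 1) := by
    intro n
    have hZc : Z * c n = c n * Z := by rw [hZ]; exact Algebra.commutes z (c n)
    calc (Z - a) * (c n * u ^ (n + 1))
        = Z * c n * u ^ (n+1) - a * c n * u ^ (n+1) := by
          rw [sub_mul, mul_assoc, mul_assoc]
    _ = c n * (Z * u ^ (n+1)) - (c (n+1) + c n * b) * u ^ (n+1) := by
          rw [hZc, hrec n, mul_assoc]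
    _ = c n * ((Z - b) * u ^ (n+1)) - c (n+1) * u ^ (n+1) := by
          rw [add_mul, sub_mul, mul_sub, mul_assoc]
          abel
    _ = c n * u ^ n - c (n + 1) * u ^ (n + 1) := by rw [hZbu]
  have hright : (Z - a) * S = 1 := by
    rw [hS, ← Summable.tsum_mul_left _ hSg]
    have : ∀ n : ℕ, (Z - a) * (c n * u ^ (n + 1))
        = (fun n => c n * u ^ n) n - (fun n => c n * u ^ n) (n + 1) := hterm
    rw [tsum_congr this, tsum_telescope hSf hSf.tendsto_atTop_zero]
    simp [hc]
  -- left inverse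
  have huZb : ∀ n : ℕ, u ^ (n + 1) * (Z - b) = u ^ n := by
    intro n
    rw [pow_succ u n, mul_assoc, hu2, mul_one]
  have hrec' : ∀ n : ℕ, c' n * a = b * c' n - c' (n + 1) := by
    intro n
    rw [hc']
    simp only
    rw [Cop_pow_succ b a n]
    abel
  have hterm' : ∀ n : ℕ, ((-1:ℂ)) ^ n • (u ^ (n+1) * c' n) * (Z - a)
      = ((-1:ℂ)) ^ n • (u ^ n * c' n) - ((-1:ℂ)) ^ (n+1) • (u ^ (n+1) * c' (n+1)) := by
    intro n
    have hZc : c' n * Z = Z * c' n := by rw [hZ]; exact (Algebra.commutes z (c' n)).symm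
    have key : u ^ (n+1) * c' n * (Z - a) = u ^ n * c' n + u ^ (n+1) * c' (n+1) := by
      calc u ^ (n+1) * c' n * (Z - a)
          = u ^ (n+1) * (c' n * Z - c' n * a) := by rw [mul_assoc, mul_sub]
      _ = u ^ (n+1) * (Z * c' n - (b * c' n - c' (n+1))) := by rw [hZc, hrec' n]
      _ = u ^ (n+1) * ((Z - b) * c' n) + u ^ (n+1) * c' (n+1) := by
            rw [sub_mul, mul_sub, mul_sub, mul_sub]
            abel
      _ = u ^ (n+1) * (Z - b) * c' n + u ^ (n+1) * c' (n+1) := by rw [mul_assoc]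
      _ = u ^ n * c' n + u ^ (n+1) * c' (n+1) := by rw [huZb]
    rw [smul_mul_assoc, key, smul_add]
    have hneg : ((-1:ℂ)) ^ (n+1) • (u ^ (n+1) * c' (n+1))
        = - (((-1:ℂ)) ^ n • (u ^ (n+1) * c' (n+1))) := by
      rw [pow_succ, mul_smul, neg_one_smul, smul_neg]
    rw [hneg, sub_neg_eq_add]
  have hleft : T * (Z - a) = 1 := by
    rw [hT, ← Summable.tsum_mul_right _ hSg']
    have : ∀ n : ℕ, ((-1:ℂ)) ^ n • (u ^ (n+1) * c' n) * (Z - a)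
        = (fun n => ((-1:ℂ)) ^ n • (u ^ n * c' n)) n
          - (fun n => ((-1:ℂ)) ^ n • (u ^ n * c' n)) (n + 1) := hterm'
    rw [tsum_congr this, tsum_telescope hSh hSh.tendsto_atTop_zero]
    simp [hc']
  have hTS : T = S := left_inv_eq_right_inv hleft hright
  have hSleft : S * (Z - a) = 1 := hTS ▸ hleft
  have hunit : IsUnit (Z - a) := ⟨⟨Z - a, S, hright, hSleft⟩, rfl⟩
  refine ⟨hunit, ?_⟩
  have : Ring.inverse ((⟨Z - a, S, hright, hSleft⟩ : Aˣ) : A) = S := Ring.inverse_unit _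
  exact this

lemma spec_subset [Nontrivial A] {a b : A}
    (hab : ∀ ε > 0, ∃ C > 0, ∀ n, ‖(Cop a b ^ n) (1:A)‖ ≤ C * ε ^ n)
    (hba : ∀ ε > 0, ∃ C > 0, ∀ n, ‖(Cop b a ^ n) (1:A)‖ ≤ C * ε ^ n) :
    spectrum ℂ a ⊆ spectrum ℂ b := by
  intro z hz
  by_contra hzb
  rw [spectrum.notMem_iff] at hzb
  exact (spectrum.notMem_iff.mpr (inverse_eq_tsum hzb hab hba).1) hz


lemma hasDerivAt_res (b : A) {z : ℂ} (hz : IsUnit (algebraMap ℂ A z - b)) :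
    HasDerivAt (fun w : ℂ => Ring.inverse (algebraMap ℂ A w - b))
      (-(Ring.inverse (algebraMap ℂ A z - b) * Ring.inverse (algebraMap ℂ A z - b))) z := by
  have haff : HasDerivAt (fun w : ℂ => algebraMap ℂ A w - b) (1 : A) z := by
    simp only [Algebra.algebraMap_eq_smul_one]
    simpa using ((hasDerivAt_id z).smul_const (1 : A)).sub_const b
  have hinv := hasFDerivAt_ringInverse (𝕜 := ℂ) hz.unit
  rw [hz.unit_spec] at hinv
  have hcomp := hinv.comp_hasDerivAt z haff
  have hval : (-(ContinuousLinearMap.mulLeftRight ℂ A ↑hz.unit⁻¹ ↑hz.unit⁻¹)) (1 : A)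
      = -(Ring.inverse (algebraMap ℂ A z - b) * Ring.inverse (algebraMap ℂ A z - b)) := by
    have hu' := Ring.inverse_unit hz.unit
    rw [hz.unit_spec] at hu'
    have hu : (↑hz.unit⁻¹ : A) = Ring.inverse (algebraMap ℂ A z - b) := hu'.symm
    simp only [ContinuousLinearMap.neg_apply, ContinuousLinearMap.mulLeftRight_apply, hu, mul_one]
  rw [hval] at hcomp
  exact hcomp

lemma hasDerivAt_res_pow (b : A) {z : ℂ} (hz : IsUnit (algebraMap ℂ A z - b)) (m : ℕ) :
    HasDerivAt (fun w : ℂ => (Ring.inverse (algebraMap ℂ A w - b)) ^ (m + 1))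
      (-((m : ℂ) + 1) • (Ring.inverse (algebraMap ℂ A z - b)) ^ (m + 2)) z := by
  induction m with
  | zero =>
    have h := hasDerivAt_res b hz
    have : (fun w : ℂ => (Ring.inverse (algebraMap ℂ A w - b)) ^ (0 + 1))
        = fun w : ℂ => Ring.inverse (algebraMap ℂ A w - b) := by
      funext w; rw [zero_add, pow_one]
    rw [this]
    convert h using 1
    simp [pow_two]
  | succ m ih =>
    have hmul := ih.mul (hasDerivAt_res b hz)
    have heq : (fun w : ℂ => (Ring.inverse (algebraMap ℂ A w - b)) ^ (m + 1)
        * Ring.inverse (algebraMap ℂ A w - b))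
        = fun w : ℂ => (Ring.inverse (algebraMap ℂ A w - b)) ^ (m + 1 + 1) := by
      funext w; rw [← pow_succ]
    simp only [Pi.mul_def] at hmul
    rw [heq] at hmul
    convert hmul using 1
    set R := Ring.inverse (algebraMap ℂ A z - b)
    have h1 : (-((m:ℂ) + 1) • R ^ (m + 2)) * R = -((m:ℂ)+1) • R ^ (m + 3) := by
      rw [smul_mul_assoc, ← pow_succ]
    have h2 : R ^ (m + 1) * -(R * R) = -(R ^ (m+3)) := by
      rw [mul_neg, ← mul_assoc, ← pow_succ, ← pow_succ]
    rw [h1, h2]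
    have : -((((m+1):ℕ):ℂ) + 1) • R ^ (m + 1 + 2) = (-((m:ℂ)+1) + (-1 : ℂ)) • R ^ (m+3) := by
      push_cast
      ring_nf
    rw [this, add_smul]
    simp [neg_one_smul]

lemma circleIntegral_res_pow_zero (b : A) {lam : ℂ} {r : ℝ} (hr : 0 ≤ r)
    (hsp : ∀ w ∈ sphere lam r, IsUnit (algebraMap ℂ A w - b)) (m : ℕ) :
    (∮ w in C(lam, r), (Ring.inverse (algebraMap ℂ A w - b)) ^ (m + 2)) = 0 := by
  refine circleIntegral.integral_eq_zero_of_hasDerivWithinAt hr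
    (f := fun w => (-(((m:ℂ)+1)⁻¹)) • (Ring.inverse (algebraMap ℂ A w - b)) ^ (m + 1))
    (fun w hw => ?_)
  have h := (hasDerivAt_res_pow b (hsp w hw) m).const_smul (-(((m:ℂ)+1)⁻¹))
  have hval : (-(((m:ℂ)+1)⁻¹)) • (-((m : ℂ) + 1) • (Ring.inverse (algebraMap ℂ A w - b)) ^ (m + 2))
      = (Ring.inverse (algebraMap ℂ A w - b)) ^ (m + 2) := by
    rw [smul_smul, neg_mul_neg, inv_mul_cancel₀ (Nat.cast_add_one_ne_zero m), one_smul]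
  rw [hval] at h
  exact h.hasDerivWithinAt


lemma res_contAt (x : A) {w : ℂ} (hw : IsUnit (algebraMap ℂ A w - x)) :
    ContinuousAt (fun w : ℂ => Ring.inverse (algebraMap ℂ A w - x)) w := by
  have h1 : ContinuousAt (fun w : ℂ => algebraMap ℂ A w - x) w :=
    ((continuous_algebraMap ℂ A).sub continuous_const).continuousAt
  have h2 : ContinuousAt Ring.inverse (algebraMap ℂ A w - x) := by
    have := NormedRing.inverse_continuousAt hw.unit
    rwa [hw.unit_spec] at this
  exact ContinuousAt.comp (g := Ring.inverse) h2 h1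

lemma rieszP_eq [Nontrivial A] {a b : A} {lam : ℂ} {r : ℝ} (hr : 0 < r)
    (hsa : ∀ w ∈ sphere lam r, IsUnit (algebraMap ℂ A w - a))
    (hsb : ∀ w ∈ sphere lam r, IsUnit (algebraMap ℂ A w - b))
    (hab : ∀ ε > 0, ∃ C > 0, ∀ n, ‖(Cop a b ^ n) (1:A)‖ ≤ C * ε ^ n)
    (hba : ∀ ε > 0, ∃ C > 0, ∀ n, ‖(Cop b a ^ n) (1:A)‖ ≤ C * ε ^ n) :
    rieszP a lam r = rieszP b lam r := by
  set Ra : ℂ → A := fun w => Ring.inverse (algebraMap ℂ A w - a) with hRa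
  set Rb : ℂ → A := fun w => Ring.inverse (algebraMap ℂ A w - b) with hRb
  set c : ℕ → A := fun n => (Cop a b ^ n) (1:A) with hcdef
  have hconta : ContinuousOn Ra (sphere lam r) :=
    fun w hw => (res_contAt a (hsa w hw)).continuousWithinAt
  have hcontb : ContinuousOn Rb (sphere lam r) :=
    fun w hw => (res_contAt b (hsb w hw)).continuousWithinAt
  obtain ⟨M, hM⟩ := (isCompact_sphere lam r).exists_bound_of_continuousOn hcontb
  set M' : ℝ := max M 0 with hM'def
  have hM'0 : 0 ≤ M' := le_max_right _ _
  have hMle : ∀ w ∈ sphere lam r, ‖Rb w‖ ≤ M' := fun w hw => (hM w hw).trans (le_max_left _ _)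
  set ε : ℝ := (2 * (M' + 1))⁻¹ with hεdef
  have hεpos : 0 < ε := by positivity
  obtain ⟨C, hC, hc⟩ := hab ε hεpos
  have hqw : ∀ w ∈ sphere lam r, ε * ‖Rb w‖ < 1 := by
    intro w hw
    have h1 : ε * ‖Rb w‖ ≤ ε * M' := mul_le_mul_of_nonneg_left (hMle w hw) hεpos.le
    have h2 : ε * M' < 1 := by
      rw [hεdef, inv_mul_lt_iff₀ (by positivity)]
      nlinarith
    linarith
  -- summability of the series at each point of the sphere
  have hεM' : ε * M' < 1 := by
    have h0 : (0:ℝ) < 2 * (M' + 1) := by positivity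
    rw [hεdef, inv_mul_lt_iff₀ h0]
    nlinarith
  have hSum : ∀ w ∈ sphere lam r, Summable (fun n => c n * (Rb w) ^ (n + 1)) := by
    intro w hw
    refine summable_geom_aux hεpos hc (hqw w hw) 1 _ fun n => ?_
    exact (norm_mul_le _ _).trans
      (mul_le_mul_of_nonneg_left (norm_pow_le'' (Rb w) (n+1)) (norm_nonneg _))
  have hSum' : ∀ w ∈ sphere lam r, Summable (fun m => c (m+1) * (Rb w) ^ (m + 2)) := by
    intro w hw
    have := (summable_nat_add_iff (f := fun n => c n * (Rb w) ^ (n + 1)) 1).mpr (hSum w hw)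
    refine this.congr fun m => ?_
    simp [add_assoc]
  -- pointwise series representation of the difference of resolvents
  have hpt : ∀ w ∈ sphere lam r, Ra w - Rb w = ∑' m, c (m+1) * (Rb w) ^ (m + 2) := by
    intro w hw
    have h1 : Ra w = ∑' n, c n * (Rb w) ^ (n + 1) :=
      (inverse_eq_tsum (a := a) (hsb w hw) hab hba).2
    have h2 : ∑' n, c n * (Rb w) ^ (n+1)
        = c 0 * (Rb w) ^ (0 + 1) + ∑' m, c (m+1) * (Rb w) ^ (m + 1 + 1) :=
      Summable.tsum_eq_zero_add (hSum w hw)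
    have h3 : c 0 * (Rb w) ^ (0 + 1) = Rb w := by
      simp [hcdef]
    rw [h1, h2, h3, add_sub_cancel_left]
  -- continuity of things composed with circleMap
  have hRbc : Continuous fun θ : ℝ => Rb (circleMap lam r θ) := by
    rw [continuous_iff_continuousAt]
    intro θ
    exact (res_contAt b (hsb _ (circleMap_mem_sphere lam hr.le θ))).comp
      (continuous_circleMap lam r).continuousAt
  have hRac : Continuous fun θ : ℝ => Ra (circleMap lam r θ) := by
    rw [continuous_iff_continuousAt]
    intro θ
    exact (res_contAt a (hsa _ (circleMap_mem_sphere lam hr.le θ))).comp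
      (continuous_circleMap lam r).continuousAt
  have hsmulc : Continuous fun θ : ℝ => circleMap 0 r θ * Complex.I :=
    (continuous_circleMap 0 r).mul continuous_const
  -- the zero integral of each term
  have hzero : ∀ m : ℕ,
      (∫ θ in (0:ℝ)..(2*Real.pi), (circleMap 0 r θ * Complex.I) •
        (c (m+1) * (Rb (circleMap lam r θ)) ^ (m + 2))) = 0 := by
    intro m
    set L : A →L[ℂ] A := ContinuousLinearMap.mul ℂ A (c (m+1)) with hL
    have hint : IntervalIntegrable
        (fun θ : ℝ => (circleMap 0 r θ * Complex.I) • (Rb (circleMap lam r θ)) ^ (m + 2))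
        MeasureTheory.volume 0 (2*Real.pi) :=
      (hsmulc.smul (hRbc.pow (m+2))).intervalIntegrable _ _
    have heq : (fun θ : ℝ => (circleMap 0 r θ * Complex.I) •
          (c (m+1) * (Rb (circleMap lam r θ)) ^ (m + 2)))
        = fun θ : ℝ => L ((circleMap 0 r θ * Complex.I) •
            (Rb (circleMap lam r θ)) ^ (m + 2)) := by
      funext θ
      rw [hL]
      simp [ContinuousLinearMap.mul_apply', mul_smul_comm]
    rw [heq, L.intervalIntegral_comp_comm hint]
    have : (∫ θ in (0:ℝ)..(2*Real.pi), (circleMap 0 r θ * Complex.I) •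
        (Rb (circleMap lam r θ)) ^ (m + 2))
        = (∮ w in C(lam, r), (Rb w) ^ (m+2)) := by
      rw [circleIntegral]
      refine intervalIntegral.integral_congr fun θ _ => ?_
      rw [deriv_circleMap]
    rw [this, circleIntegral_res_pow_zero b hr.le hsb m, map_zero]
  -- interchange sum and integral
  have hμfin : MeasureTheory.volume (Set.Ioc (0:ℝ) (2*Real.pi)) < ⊤ :=
    measure_Ioc_lt_top
  have hswap : HasSum
      (fun m : ℕ => ∫ θ in Set.Ioc (0:ℝ) (2*Real.pi), (circleMap 0 r θ * Complex.I) •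
        (c (m+1) * (Rb (circleMap lam r θ)) ^ (m + 2)))
      (∫ θ in Set.Ioc (0:ℝ) (2*Real.pi), (circleMap 0 r θ * Complex.I) •
        (Ra (circleMap lam r θ) - Rb (circleMap lam r θ))) := by
    refine MeasureTheory.hasSum_integral_of_dominated_convergence
      (bound := fun m _ => (r * (C * ε) * (M' + 1) ^ 2) * (ε * M') ^ m)
      ?_ ?_ ?_ ?_ ?_
    · intro m
      exact ((hsmulc.smul ((continuous_const.mul (hRbc.pow (m+2)))) : Continuous _)).aestronglyMeasurable
    · intro m
      refine Filter.Eventually.of_forall fun θ => ?_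
      have hmem := circleMap_mem_sphere lam hr.le θ
      have h1 : ‖(circleMap 0 r θ * Complex.I)‖ = r := by
        simp [norm_mul, abs_of_pos hr]
      rw [norm_smul, h1]
      have h2 : ‖c (m+1) * (Rb (circleMap lam r θ)) ^ (m + 2)‖
          ≤ (C * ε ^ (m+1)) * M' ^ (m+2) := by
        calc ‖c (m+1) * (Rb (circleMap lam r θ)) ^ (m + 2)‖
            ≤ ‖c (m+1)‖ * ‖(Rb (circleMap lam r θ)) ^ (m + 2)‖ := norm_mul_le _ _
        _ ≤ (C * ε ^ (m+1)) * M' ^ (m+2) := by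
            refine mul_le_mul (hc (m+1)) ?_ (norm_nonneg _) (by positivity)
            exact (norm_pow_le'' _ _).trans
              (pow_le_pow_left₀ (norm_nonneg _) (hMle _ hmem) _)
      have h3 : (C * ε ^ (m+1)) * M' ^ (m+2) ≤ ((C * ε) * (M' + 1) ^ 2) * (ε * M') ^ m := by
        have e1 : (C * ε ^ (m+1)) * M' ^ (m+2) = ((C * ε) * M' ^ 2) * (ε * M') ^ m := by
          rw [pow_succ, pow_add, mul_pow]; ring
        rw [e1]
        have h4 : (0:ℝ) ≤ (ε * M') ^ m := by positivity
        have h5 : (C * ε) * M' ^ 2 ≤ (C * ε) * (M' + 1) ^ 2 :=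
          mul_le_mul_of_nonneg_left (by nlinarith) (by positivity)
        exact mul_le_mul_of_nonneg_right h5 h4
      calc r * ‖c (m+1) * (Rb (circleMap lam r θ)) ^ (m + 2)‖
          ≤ r * ((C * ε ^ (m+1)) * M' ^ (m+2)) := by
            exact mul_le_mul_of_nonneg_left h2 hr.le
      _ ≤ r * (((C * ε) * (M' + 1) ^ 2) * (ε * M') ^ m) :=
            mul_le_mul_of_nonneg_left h3 hr.le
      _ = (r * (C * ε) * (M' + 1) ^ 2) * (ε * M') ^ m := by ring
    · exact Filter.Eventually.of_forall fun θ =>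
        Summable.mul_left _ (summable_geometric_of_lt_one (by positivity) hεM')
    · exact (MeasureTheory.integrableOn_const_iff).mpr (Or.inr hμfin)
    · refine Filter.Eventually.of_forall fun θ => ?_
      have hmem := circleMap_mem_sphere lam hr.le θ
      have h := ((hSum' _ hmem).hasSum).const_smul (circleMap 0 r θ * Complex.I)
      rwa [← hpt _ hmem] at h
  -- conclude the circle integral of the difference vanishes
  have hdiffzero : (∮ w in C(lam, r), (Ra w - Rb w)) = 0 := by
    have h1 : (∮ w in C(lam, r), (Ra w - Rb w))
        = ∫ θ in Set.Ioc (0:ℝ) (2*Real.pi), (circleMap 0 r θ * Complex.I) •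
            (Ra (circleMap lam r θ) - Rb (circleMap lam r θ)) := by
      rw [circleIntegral, intervalIntegral.integral_of_le (by positivity)]
      refine MeasureTheory.setIntegral_congr_fun measurableSet_Ioc fun θ _ => ?_
      rw [deriv_circleMap]
    have h2 : ∀ m : ℕ, (∫ θ in Set.Ioc (0:ℝ) (2*Real.pi), (circleMap 0 r θ * Complex.I) •
        (c (m+1) * (Rb (circleMap lam r θ)) ^ (m + 2))) = 0 := by
      intro m
      rw [← intervalIntegral.integral_of_le (by positivity : (0:ℝ) ≤ 2*Real.pi)]
      exact hzero m
    have h3 := hswap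
    simp only [h2] at h3
    rw [h1]
    exact (hasSum_zero.unique h3).symm
  -- finish
  have hCIa : CircleIntegrable Ra lam r := hconta.circleIntegrable hr.le
  have hCIb : CircleIntegrable Rb lam r := hcontb.circleIntegrable hr.le
  have h4 : (∮ w in C(lam, r), Ra w) = (∮ w in C(lam, r), Rb w) := by
    have := circleIntegral.integral_sub hCIa hCIb
    rw [hdiffzero] at this
    exact (sub_eq_zero.mp this.symm)
  rw [rieszP, rieszP]
  rw [hRa] at h4
  rw [h4]


noncomputable def cstarInst [NormedRing A] [StarRing A] [CStarRing A] [NormedAlgebra ℂ A]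
    [CompleteSpace A] [StarModule ℂ A] : CStarAlgebra A :=
  { ‹NormedRing A›, ‹StarRing A›, ‹CStarRing A›, ‹NormedAlgebra ℂ A›, ‹CompleteSpace A›,
    ‹StarModule ℂ A› with }

attribute [reducible] cstarInst
attribute [local instance] cstarInst

/-- The indicator of the ball `B(lam, r)` as a continuous map on the spectrum. -/
noncomputable def eCM (x : A) (lam : ℂ) (r : ℝ)
    (h : ∀ w ∈ spectrum ℂ x, dist w lam ≠ r) : C(spectrum ℂ x, ℂ) :=
  ⟨fun w => if dist (w : ℂ) lam < r then 1 else 0, by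
    refine IsLocallyConstant.continuous ?_
    rw [IsLocallyConstant.iff_exists_open]
    rintro ⟨w, hw⟩
    rcases lt_trichotomy (dist w lam) r with hlt | heq | hgt
    · refine ⟨Subtype.val ⁻¹' (Metric.ball lam r),
        Metric.isOpen_ball.preimage continuous_subtype_val, ?_, ?_⟩
      · simpa [Metric.mem_ball] using hlt
      · rintro ⟨y, hy⟩ hmem
        simp only [Set.mem_preimage, Metric.mem_ball] at hmem
        simp [hmem, hlt]
    · exact absurd heq (h w hw)
    · refine ⟨Subtype.val ⁻¹' (Metric.closedBall lam r)ᶜ,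
        Metric.isClosed_closedBall.isOpen_compl.preimage continuous_subtype_val, ?_, ?_⟩
      · simpa [Metric.mem_closedBall] using not_le.mpr hgt
      · rintro ⟨y, hy⟩ hmem
        simp only [Set.mem_preimage, Set.mem_compl_iff, Metric.mem_closedBall, not_le] at hmem
        simp [not_lt.mpr hmem.le, not_lt.mpr hgt.le]⟩

lemma eCM_apply (x : A) (lam : ℂ) (r : ℝ) (h : ∀ w ∈ spectrum ℂ x, dist w lam ≠ r)
    (w : spectrum ℂ x) :
    eCM x lam r h w = if dist (w : ℂ) lam < r then 1 else 0 := rfl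

lemma rieszP_eq_cfcHom [Nontrivial A] (x : A) (hx : IsStarNormal x) {lam : ℂ} {r : ℝ}
    (hr : 0 < r) (h : ∀ w ∈ spectrum ℂ x, dist w lam ≠ r) :
    rieszP x lam r = cfcHom hx (R := ℂ) (eCM x lam r h) := by
  set K : Set ℂ := spectrum ℂ x with hK
  have hzsp : ∀ θ : ℝ, circleMap lam r θ ∉ K := by
    intro θ hmem
    exact h _ hmem (mem_sphere.mp (circleMap_mem_sphere lam hr.le θ))
  have hne : ∀ (θ : ℝ) (w : K), circleMap lam r θ - (w : ℂ) ≠ 0 := by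
    intro θ w
    refine sub_ne_zero.mpr fun e => hzsp θ ?_
    rw [e]; exact w.2
  -- the kernel as a continuous map
  have hFc : Continuous fun p : ℝ × K => (circleMap lam r p.1 - (p.2 : ℂ))⁻¹ := by
    refine Continuous.inv₀ ?_ fun p => hne p.1 p.2
    exact ((continuous_circleMap lam r).comp continuous_fst).sub
      (continuous_subtype_val.comp continuous_snd)
  set F : C(ℝ × K, ℂ) := ⟨_, hFc⟩ with hF
  set Fc : ℝ → C(K, ℂ) := fun θ => (ContinuousMap.curry F) θ with hFcdef
  have hFcont : Continuous Fc := (ContinuousMap.curry F).continuous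
  -- cfcHom as a continuous linear map
  set Φ : C(K, ℂ) →L[ℂ] A :=
    ⟨((cfcHom hx (R := ℂ)) : C(K,ℂ) →⋆ₐ[ℂ] A).toAlgHom.toLinearMap,
      (cfcHom_isClosedEmbedding hx).continuous⟩ with hΦ
  have hΦapp : ∀ f : C(K, ℂ), Φ f = cfcHom hx (R := ℂ) f := fun f => rfl
  -- resolvent = cfc of the kernel
  have hres : ∀ θ : ℝ, Ring.inverse (algebraMap ℂ A (circleMap lam r θ) - x)
      = cfcHom hx (R := ℂ) (Fc θ) := by
    intro θ
    have h1 : cfcHom hx (R := ℂ)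
        (algebraMap ℂ C(K, ℂ) (circleMap lam r θ) - (ContinuousMap.id ℂ).restrict K)
        = algebraMap ℂ A (circleMap lam r θ) - x := by
      rw [map_sub, AlgHomClass.commutes, cfcHom_id hx]
    have hmul : Fc θ * (algebraMap ℂ C(K, ℂ) (circleMap lam r θ)
        - (ContinuousMap.id ℂ).restrict K) = 1 := by
      ext w
      simp only [ContinuousMap.mul_apply, ContinuousMap.one_apply]
      have : (Fc θ) w = (circleMap lam r θ - (w : ℂ))⁻¹ := rfl
      rw [this]
      have h2 : ((algebraMap ℂ C(K, ℂ) (circleMap lam r θ)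
          - (ContinuousMap.id ℂ).restrict K) w) = circleMap lam r θ - (w : ℂ) := rfl
      rw [h2]
      exact inv_mul_cancel₀ (hne θ w)
    have hmul' : (algebraMap ℂ C(K, ℂ) (circleMap lam r θ)
        - (ContinuousMap.id ℂ).restrict K) * Fc θ = 1 := by
      rw [mul_comm]; exact hmul
    have h2 : cfcHom hx (R := ℂ) (Fc θ) * (algebraMap ℂ A (circleMap lam r θ) - x) = 1 := by
      rw [← h1, ← map_mul, hmul, map_one]
    have h3 : (algebraMap ℂ A (circleMap lam r θ) - x) * cfcHom hx (R := ℂ) (Fc θ) = 1 := by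
      rw [← h1, ← map_mul, hmul', map_one]
    have := Ring.inverse_unit
      (⟨algebraMap ℂ A (circleMap lam r θ) - x, cfcHom hx (R := ℂ) (Fc θ), h3, h2⟩ : Aˣ)
    exact this
  -- integrability
  have hint : IntervalIntegrable (fun θ => (circleMap 0 r θ * Complex.I) • Fc θ)
      MeasureTheory.volume 0 (2 * Real.pi) :=
    (((continuous_circleMap 0 r).mul continuous_const).smul hFcont).intervalIntegrable _ _
  set Gint : C(K, ℂ) := ∫ θ in (0:ℝ)..(2 * Real.pi), (circleMap 0 r θ * Complex.I) • Fc θ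
    with hGint
  -- pull cfcHom out of the integral
  have hrp : rieszP x lam r = (2 * Real.pi * Complex.I : ℂ)⁻¹ • Φ Gint := by
    rw [rieszP, circleIntegral]
    congr 1
    rw [hGint, ← Φ.intervalIntegral_comp_comm hint]
    refine intervalIntegral.integral_congr fun θ _ => ?_
    rw [deriv_circleMap, hres θ, map_smul, hΦapp]
  -- evaluate the integral pointwise
  have heval : ∀ w : K, Gint w = ∮ z in C(lam, r), (z - (w : ℂ))⁻¹ := by
    intro w
    have h1 := (ContinuousMap.evalCLM (R := ℂ) w).intervalIntegral_comp_comm hint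
    have h2 : (ContinuousMap.evalCLM (R := ℂ) w) Gint = Gint w := rfl
    rw [hGint, ← h2, ← h1, circleIntegral]
    refine intervalIntegral.integral_congr fun θ _ => ?_
    rw [deriv_circleMap]
    rfl
  have hval : Gint = (2 * Real.pi * Complex.I : ℂ) • eCM x lam r h := by
    ext w
    rw [ContinuousMap.smul_apply, heval w, eCM_apply]
    rcases lt_trichotomy (dist (w : ℂ) lam) r with hlt | heq | hgt
    · rw [if_pos hlt, smul_eq_mul, mul_one,
        circleIntegral.integral_sub_inv_of_mem_ball (Metric.mem_ball.mpr hlt)]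
    · exact absurd heq (h w w.2)
    · rw [if_neg (not_lt.mpr hgt.le), smul_eq_mul, mul_zero]
      have hwz : ∀ z ∈ closedBall lam r, z - (w : ℂ) ≠ 0 := by
        intro z hz
        refine sub_ne_zero.mpr fun e => ?_
        rw [← e] at hgt
        exact absurd (Metric.mem_closedBall.mp hz) (not_le.mpr hgt)
      refine Complex.circleIntegral_eq_zero_of_differentiable_on_off_countable hr.le
        Set.countable_empty ?_ ?_
      · exact (continuousOn_id.sub continuousOn_const).inv₀ hwz
      · intro z hz
        exact (differentiableAt_id.sub_const _).inv
          (hwz z (Metric.ball_subset_closedBall hz.1))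
  rw [hrp, hval, map_smul, smul_smul, inv_mul_cancel₀, one_smul, hΦapp]
  exact mul_ne_zero (mul_ne_zero two_ne_zero
    (Complex.ofReal_ne_zero.mpr Real.pi_ne_zero)) Complex.I_ne_zero


lemma approx [Nontrivial A] (x : A) (hx : IsStarNormal x) {δ : ℝ} (hδ : 0 ≤ δ)
    (S : Finset ℂ) (Rr : ℂ → ℝ)
    (hR : ∀ lam ∈ S, 0 < Rr lam)
    (hsep : ∀ lam ∈ S, ∀ w ∈ spectrum ℂ x, dist w lam < Rr lam → w = lam)
    (hdist : ∀ lam ∈ S, ∀ w ∈ spectrum ℂ x, dist w lam ≠ Rr lam)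
    (hcover : ∀ w ∈ spectrum ℂ x, w ∉ S → ‖w‖ ≤ δ) :
    ‖x - ∑ lam ∈ S, lam • rieszP x lam (Rr lam)‖ ≤ δ := by
  classical
  set g : C(spectrum ℂ x, ℂ) :=
    ∑ t ∈ S.attach, (t : ℂ) • eCM x t (Rr t) (hdist t t.2) with hg
  have hsum : ∑ lam ∈ S, lam • rieszP x lam (Rr lam) = cfcHom hx (R := ℂ) g := by
    rw [hg, map_sum]
    rw [← Finset.sum_attach S (fun lam => lam • rieszP x lam (Rr lam))]
    refine Finset.sum_congr rfl fun t _ => ?_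
    rw [rieszP_eq_cfcHom x hx (hR t t.2) (hdist t t.2), map_smul]
  have key : x - cfcHom hx (R := ℂ) g
      = cfcHom hx (R := ℂ) ((ContinuousMap.id ℂ).restrict (spectrum ℂ x) - g) := by
    rw [map_sub, cfcHom_id hx]
  rw [hsum, key, norm_cfcHom x _ hx]
  refine (ContinuousMap.norm_le _ hδ).mpr fun w => ?_
  have happ : ((ContinuousMap.id ℂ).restrict (spectrum ℂ x) - g) w
      = (w : ℂ) - ∑ t ∈ S.attach, (t : ℂ) *
          (if dist (w : ℂ) (t : ℂ) < Rr t then 1 else 0) := by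
    rw [ContinuousMap.sub_apply, hg]
    congr 1
    rw [ContinuousMap.sum_apply]
    exact Finset.sum_congr rfl fun t _ => by
      rw [ContinuousMap.smul_apply, eCM_apply, smul_eq_mul]
  rw [happ]
  by_cases hwS : (w : ℂ) ∈ S
  · have hsum2 : ∑ t ∈ S.attach, (t : ℂ) *
        (if dist (w : ℂ) (t : ℂ) < Rr t then 1 else 0) = (w : ℂ) := by
      rw [Finset.sum_eq_single_of_mem (⟨(w : ℂ), hwS⟩ : {z // z ∈ S})
        (Finset.mem_attach _ _)]
      · have : dist (w : ℂ) (w : ℂ) < Rr w := by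
          rw [dist_self]; exact hR _ hwS
        rw [if_pos this, mul_one]
      · intro t _ htne
        have hno : ¬ dist (w : ℂ) (t : ℂ) < Rr t := by
          intro hlt
          exact htne (Subtype.ext ((hsep t t.2 (w : ℂ) w.2 hlt).symm))
        rw [if_neg hno, mul_zero]
    rw [hsum2, sub_self, norm_zero]
    exact hδ
  · have hsum0 : ∑ t ∈ S.attach, (t : ℂ) *
        (if dist (w : ℂ) (t : ℂ) < Rr t then 1 else 0) = 0 := by
      refine Finset.sum_eq_zero fun t _ => ?_
      have hno : ¬ dist (w : ℂ) (t : ℂ) < Rr t := by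
        intro hlt
        exact hwS ((hsep t t.2 (w : ℂ) w.2 hlt) ▸ t.2)
      rw [if_neg hno, mul_zero]
    rw [hsum0, sub_zero]
    exact hcover _ w.2 hwS

lemma spec_big_finite (x : A) {δ : ℝ} (hδ : 0 < δ)
    (hacc : ∀ lam ∈ spectrum ℂ x, lam ≠ 0 →
      ∃ ε > 0, spectrum ℂ x ∩ Metric.ball lam ε = {lam}) :
    {z ∈ spectrum ℂ x | δ ≤ ‖z‖}.Finite := by
  by_contra hinf
  have hK : IsCompact (spectrum ℂ x ∩ {z : ℂ | δ ≤ ‖z‖}) :=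
    (spectrum.isCompact x).inter_right (isClosed_le continuous_const continuous_norm)
  have hsub : {z ∈ spectrum ℂ x | δ ≤ ‖z‖} ⊆ spectrum ℂ x ∩ {z : ℂ | δ ≤ ‖z‖} :=
    fun z hz => ⟨hz.1, hz.2⟩
  obtain ⟨p, hpK, hp⟩ :=
    Set.Infinite.exists_accPt_of_subset_isCompact hinf hK hsub
  have hp0 : p ≠ 0 := by
    intro e
    rw [e] at hpK
    simp only [Set.mem_inter_iff, Set.mem_setOf_eq, norm_zero] at hpK
    linarith [hpK.2]
  obtain ⟨ε, hε, hball⟩ := hacc p hpK.1 hp0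
  obtain ⟨y, hy, hyne⟩ := (accPt_iff_nhds.mp hp) (Metric.ball p ε) (Metric.ball_mem_nhds p hε)
  have : y ∈ spectrum ℂ x ∩ Metric.ball p ε := ⟨hy.2.1, hy.1⟩
  rw [hball] at this
  exact hyne this

lemma qd_self (a : A) : qd a a = 0 := by
  have h : rho a a = 0 := by
    have hev : ∀ᶠ n in atTop,
        (fun n : ℕ => ‖(Cop a a ^ n) (1:A)‖ ^ (1 / (n : ℝ))) n = (fun _ : ℕ => (0:ℝ)) n := by
      filter_upwards [eventually_ge_atTop 1] with n hn
      obtain ⟨m, rfl⟩ : ∃ m, n = m + 1 := ⟨n - 1, by omega⟩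
      have h1 : (Cop a a ^ (m+1)) (1:A) = 0 := by
        rw [pow_succ, Module.End.mul_apply, Cop_apply, mul_one, one_mul, sub_self, map_zero]
      simp only [h1, norm_zero]
      rw [Real.zero_rpow]
      positivity
    rw [rho, limsup_congr hev, limsup_const]
  rw [qd, h, max_self]

end Aux

theorem stmt19 [NormedRing A] [StarRing A] [CStarRing A] [NormedAlgebra ℂ A]
    [CompleteSpace A] [StarModule ℂ A]
    (a b : A) (hna : IsStarNormal a) (hnb : IsStarNormal b)
    (hacc : ∀ lam ∈ spectrum ℂ a, lam ≠ 0 →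
      ∃ ε > 0, spectrum ℂ a ∩ Metric.ball lam ε = {lam}) :
    qd a b = 0 ↔ a = b := by
  constructor
  · intro hqd
    rcases subsingleton_or_nontrivial A with hsub | hnt
    · exact Subsingleton.elim a b
    have hrab : rho a b ≤ 0 := le_trans (le_max_left _ _) hqd.le
    have hrba : rho b a ≤ 0 := le_trans (le_max_right _ _) hqd.le
    have hab := eps_bound hrab
    have hba := eps_bound hrba
    have hspec : spectrum ℂ b = spectrum ℂ a :=
      subset_antisymm (spec_subset hba hab) (spec_subset hab hba)
    have key : ∀ δ : ℝ, 0 < δ → ‖a - b‖ ≤ 2 * δ := by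
      intro δ hδ
      have hfin := spec_big_finite a hδ hacc
      classical
      set S : Finset ℂ := hfin.toFinset with hS
      have hmemS : ∀ lam, lam ∈ S ↔ lam ∈ spectrum ℂ a ∧ δ ≤ ‖lam‖ := by
        intro lam
        rw [hS, Set.Finite.mem_toFinset]
        exact Iff.rfl
      have hex : ∀ lam ∈ S, ∃ rr : ℝ, 0 < rr ∧
          (∀ w ∈ spectrum ℂ a, dist w lam < rr → w = lam) ∧
          (∀ w ∈ spectrum ℂ a, dist w lam ≠ rr) := by
        intro lam hlam
        obtain ⟨hlsp, hlδ⟩ := (hmemS lam).mp hlam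
        have hlam0 : lam ≠ 0 := by
          intro e
          rw [e, norm_zero] at hlδ
          linarith
        obtain ⟨ε, hε, hball⟩ := hacc lam hlsp hlam0
        have hmem : ∀ w ∈ spectrum ℂ a, dist w lam < ε → w = lam := by
          intro w hw hd
          have h1 : w ∈ spectrum ℂ a ∩ Metric.ball lam ε := ⟨hw, Metric.mem_ball.mpr hd⟩
          rw [hball] at h1
          exact h1
        refine ⟨ε/2, by positivity, ?_, ?_⟩
        · intro w hw hd
          exact hmem w hw (by linarith)
        · intro w hw hd
          have hwl := hmem w hw (by rw [hd]; linarith)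
          rw [hwl, dist_self] at hd
          linarith
      choose! Rr hR1 hR2 hR3 using hex
      have hR2b : ∀ lam ∈ S, ∀ w ∈ spectrum ℂ b, dist w lam < Rr lam → w = lam := by
        intro lam hl w hw
        exact hR2 lam hl w (by rwa [hspec] at hw)
      have hR3b : ∀ lam ∈ S, ∀ w ∈ spectrum ℂ b, dist w lam ≠ Rr lam := by
        intro lam hl w hw
        exact hR3 lam hl w (by rwa [hspec] at hw)
      have hcova : ∀ w ∈ spectrum ℂ a, w ∉ S → ‖w‖ ≤ δ := by
        intro w hw hwS
        by_contra hlt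
        exact hwS ((hmemS w).mpr ⟨hw, (not_le.mp hlt).le⟩)
      have hcovb : ∀ w ∈ spectrum ℂ b, w ∉ S → ‖w‖ ≤ δ := by
        intro w hw
        exact hcova w (by rwa [hspec] at hw)
      have hriesz : ∀ lam ∈ S, rieszP a lam (Rr lam) = rieszP b lam (Rr lam) := by
        intro lam hl
        refine rieszP_eq (hR1 lam hl) ?_ ?_ hab hba
        · intro w hw
          exact spectrum.notMem_iff.mp fun hmem => hR3 lam hl w hmem (mem_sphere.mp hw)
        · intro w hw
          exact spectrum.notMem_iff.mp fun hmem => hR3b lam hl w hmem (mem_sphere.mp hw)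
      have hA := approx a hna hδ.le S Rr hR1 hR2 hR3 hcova
      have hB := approx b hnb hδ.le S Rr hR1 hR2b hR3b hcovb
      have hsumeq : ∑ lam ∈ S, lam • rieszP a lam (Rr lam)
          = ∑ lam ∈ S, lam • rieszP b lam (Rr lam) :=
        Finset.sum_congr rfl fun lam hl => by rw [hriesz lam hl]
      set X := ∑ lam ∈ S, lam • rieszP a lam (Rr lam) with hX
      rw [← hsumeq] at hB
      calc ‖a - b‖ = ‖(a - X) - (b - X)‖ := by rw [sub_sub_sub_cancel_right]
      _ ≤ ‖a - X‖ + ‖b - X‖ := norm_sub_le _ _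
      _ ≤ δ + δ := add_le_add hA hB
      _ = 2 * δ := by ring
    have hle : ‖a - b‖ ≤ 0 := by
      refine le_of_forall_pos_le_add fun ε hε => ?_
      have := key (ε/2) (by positivity)
      linarith
    exact eq_of_sub_eq_zero (norm_le_zero_iff.mp hle)
  · intro h
    rw [h]
    exact qd_self b
end
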